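/- For every L > 0, every n ∈ ℕ, and all real a, b ≥ 0, the Lebesgue measure of the n-iterate Cantor set satisfies |C_n(L) ∩ [0, a+b]| ≤ |C_n(L) ∩ [0, a]| + |C_n(L) ∩ [0, b]|; equivalently, the n-iterate Cantor function 𝒢_{L,n}(x) = |C_n(L) ∩ [0,x]| / |C_n(L)| (extended by 0 for x ≤ 0) is subadditive on ℝ. -/

import Mathlib

/-!
Among all intervals of a given length, the one starting at `0` carries the most mass of
`C_n(L)`: `|C_n(L) ∩ [u, v]| ≤ |C_n(L) ∩ [0, v - u]|`. Subadditivity follows by splitting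
`[0, a + b]` at `a`.

The interval inequality is proved by induction on `n`. Since `C_{n+1}(L)` is the union of
`C_n(L) / 3` and `(2L + C_n(L)) / 3`, the mass of `[u, v]` is a third of the masses of
`[s, t] = [3u, 3v]` and of its shift `[s - 2L, t - 2L]` in `C_n(L)`. If the interval meets only
one of the two copies, the induction hypothesis applies directly. Otherwise `s < L < 2L < t`,
so `[0, s]` and `[s, t]` together exhaust `C_n(L)`, and the shifted interval is covered by
`[0, s]` and `[s, t - 2L]`, whose mass the induction hypothesis bounds by that of `[0, t - s - 2L]`.
-/

open MeasureTheory Set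
open scoped Pointwise

/-- The `n`-iterate mid-third Cantor set based in `[0, L]`:
`C₀(L) = [0,L]` and `C_{n+1}(L) = (1/3)·C_n(L) ∪ (2L/3 + (1/3)·C_n(L))`. -/
def cantorIterate : ℕ → ℝ → Set ℝ
  | 0, L => Set.Icc 0 L
  | n + 1, L =>
      (fun x => x / 3) '' cantorIterate n L ∪
        (fun x => 2 * L / 3 + x / 3) '' cantorIterate n L

theorem measure_inter_Icc_le_add (μ : Measure ℝ) (S : Set ℝ) (a b c : ℝ) :
    μ (S ∩ Icc a c) ≤ μ (S ∩ Icc a b) + μ (S ∩ Icc b c) := by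
  refine (measure_mono ?_).trans (measure_union_le _ _)
  rw [← inter_union_distrib_left]
  exact inter_subset_inter_right _ Icc_subset_Icc_union_Icc

theorem measure_inter_Icc_add_measure_inter_Icc {μ : Measure ℝ} [NullSingletonClass μ]
    {S : Set ℝ} (hS : MeasurableSet S) {a b c : ℝ} (hab : a ≤ b) (hbc : b ≤ c) :
    μ (S ∩ Icc a b) + μ (S ∩ Icc b c) = μ (S ∩ Icc a c) := by
  have hnull : μ (S ∩ Icc a b ∩ (S ∩ Icc b c)) = 0 :=
    measure_mono_null (fun _ hx => le_antisymm hx.1.2.2 hx.2.2.1) (measure_singleton b)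
  rw [← measure_union_add_inter _ (hS.inter measurableSet_Icc), hnull, add_zero,
    ← inter_union_distrib_left, Icc_union_Icc_eq_Icc hab hbc]

theorem volume_image_add_div (c : ℝ) {r : ℝ} (hr : 0 < r) (S : Set ℝ) :
    volume ((fun x => c + x / r) '' S) = ENNReal.ofReal r⁻¹ * volume S := by
  have : (fun x => c + x / r) '' S = (c + ·) '' (r⁻¹ • S) := by
    rw [← image_smul, image_image]
    simp only [smul_eq_mul, div_eq_inv_mul]
  rw [this, image_add_left, measure_preimage_add, Measure.addHaar_smul, Module.finrank_self,
    pow_one, abs_of_pos (inv_pos.2 hr)]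

theorem volume_image_add_div_inter_Icc (c : ℝ) {r : ℝ} (hr : 0 < r) (S : Set ℝ) (u v : ℝ) :
    volume ((fun x => c + x / r) '' S ∩ Icc u v) =
      ENNReal.ofReal r⁻¹ * volume (S ∩ Icc (r * (u - c)) (r * (v - c))) := by
  rw [← image_inter_preimage, volume_image_add_div c hr]
  congr 3
  ext x
  simp only [mem_preimage, mem_Icc]
  rw [← sub_le_iff_le_add', le_div_iff₀ hr, ← le_sub_iff_add_le', div_le_iff₀ hr]
  constructor <;> rintro ⟨h1, h2⟩ <;> constructor <;> linarith

section SubsetIcc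

variable {μ : Measure ℝ} {S : Set ℝ} {L : ℝ}

theorem inter_Icc_eq_inter_Icc_zero (hSL : S ⊆ Icc 0 L) {u : ℝ} (hu : u ≤ 0) (v : ℝ) :
    S ∩ Icc u v = S ∩ Icc 0 v := by
  ext x
  constructor
  · rintro ⟨hx, -, hxv⟩
    exact ⟨hx, (hSL hx).1, hxv⟩
  · rintro ⟨hx, h0x, hxv⟩
    exact ⟨hx, hu.trans h0x, hxv⟩

theorem inter_Icc_zero_eq_self (hSL : S ⊆ Icc 0 L) {t : ℝ} (ht : L ≤ t) : S ∩ Icc 0 t = S :=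
  inter_eq_left.2 (hSL.trans (Icc_subset_Icc_right ht))

variable [NullSingletonClass μ]

theorem measure_inter_Icc_eq_zero_of_nonpos (hSL : S ⊆ Icc 0 L) (u : ℝ) {v : ℝ}
    (hv : v ≤ 0) : μ (S ∩ Icc u v) = 0 :=
  measure_mono_null (fun _ hx => le_antisymm (hx.2.2.trans hv) (hSL hx.1).1)
    (measure_singleton 0)

theorem measure_inter_Icc_eq_zero_of_le (hSL : S ⊆ Icc 0 L) {u : ℝ} (hu : L ≤ u) (v : ℝ) :
    μ (S ∩ Icc u v) = 0 :=
  measure_mono_null (fun _ hx => le_antisymm (hSL hx.1).2 (hu.trans hx.2.1))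
    (measure_singleton L)

theorem measure_inter_Icc_add_shift_le (hS : MeasurableSet S) (hSL : S ⊆ Icc 0 L)
    (htrans : ∀ u v, μ (S ∩ Icc u v) ≤ μ (S ∩ Icc 0 (v - u))) {s t : ℝ} (hs : 0 < s) :
    μ (S ∩ Icc s t) + μ (S ∩ Icc (s - 2 * L) (t - 2 * L)) ≤
      μ (S ∩ Icc 0 (t - s)) + μ (S ∩ Icc (-(2 * L)) (t - s - 2 * L)) := by
  rcases le_or_gt t (2 * L) with htL | hLt
  · rw [measure_inter_Icc_eq_zero_of_nonpos hSL _ (v := t - 2 * L) (by linarith), add_zero]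
    exact (htrans s t).trans le_self_add
  rcases le_or_gt L s with hLs | hsL
  · rw [measure_inter_Icc_eq_zero_of_le hSL hLs, zero_add]
    exact (htrans _ _).trans_eq (by ring_nf) |>.trans le_self_add
  have h_middle : μ (S ∩ Icc s (t - 2 * L)) ≤ μ (S ∩ Icc 0 (t - s - 2 * L)) :=
    (htrans _ _).trans_eq (by ring_nf)
  calc μ (S ∩ Icc s t) + μ (S ∩ Icc (s - 2 * L) (t - 2 * L))
      = μ (S ∩ Icc s t) + μ (S ∩ Icc 0 (t - 2 * L)) := by
        rw [inter_Icc_eq_inter_Icc_zero hSL (u := s - 2 * L) (by linarith)]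
    _ ≤ μ (S ∩ Icc s t) + (μ (S ∩ Icc 0 s) + μ (S ∩ Icc s (t - 2 * L))) := by
        grw [measure_inter_Icc_le_add μ S 0 s (t - 2 * L)]
    _ ≤ μ (S ∩ Icc s t) + (μ (S ∩ Icc 0 s) + μ (S ∩ Icc 0 (t - s - 2 * L))) := by
        grw [h_middle]
    _ = (μ (S ∩ Icc 0 s) + μ (S ∩ Icc s t)) + μ (S ∩ Icc 0 (t - s - 2 * L)) := by ring
    _ = μ (S ∩ Icc 0 (t - s)) + μ (S ∩ Icc (-(2 * L)) (t - s - 2 * L)) := by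
        rw [measure_inter_Icc_add_measure_inter_Icc hS hs.le (by linarith),
          inter_Icc_zero_eq_self hSL (t := t) (by linarith),
          inter_Icc_zero_eq_self hSL (t := t - s) (by linarith),
          inter_Icc_eq_inter_Icc_zero hSL (u := -(2 * L)) (by linarith)]

end SubsetIcc

theorem cantorIterate_subset_Icc (n : ℕ) (L : ℝ) : cantorIterate n L ⊆ Icc 0 L := by
  induction n with
  | zero => exact Subset.rfl
  | succ n ih =>
    rintro x (⟨y, hy, rfl⟩ | ⟨y, hy, rfl⟩) <;> obtain ⟨h0, h1⟩ := ih hy <;>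
      constructor <;> linarith

theorem isCompact_cantorIterate (n : ℕ) (L : ℝ) : IsCompact (cantorIterate n L) := by
  induction n with
  | zero => exact isCompact_Icc
  | succ n ih => exact (ih.image (by fun_prop)).union (ih.image (by fun_prop))

theorem volume_cantorIterate_succ_inter_Icc (n : ℕ) (L u v : ℝ) :
    volume (cantorIterate (n + 1) L ∩ Icc u v) =
      ENNReal.ofReal 3⁻¹ * volume (cantorIterate n L ∩ Icc (3 * u) (3 * v)) +
        ENNReal.ofReal 3⁻¹ *
          volume (cantorIterate n L ∩ Icc (3 * u - 2 * L) (3 * v - 2 * L)) := by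
  set C := cantorIterate n L
  have hC := cantorIterate_subset_Icc n L
  have hoverlap : volume ((fun x => x / 3) '' C ∩ Icc u v ∩
      ((fun x => 2 * L / 3 + x / 3) '' C ∩ Icc u v)) = 0 := by
    refine measure_mono_null ?_ (measure_singleton (L / 3))
    rintro _ ⟨⟨⟨y, hy, rfl⟩, -⟩, ⟨z, hz, hzy⟩, -⟩
    obtain ⟨hy0, hyL⟩ := hC hy
    obtain ⟨hz0, hzL⟩ := hC hz
    simp only at hzy
    show y / 3 = L / 3
    linarith
  have hleft := volume_image_add_div_inter_Icc 0 three_pos C u v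
  have hright := volume_image_add_div_inter_Icc (2 * L / 3) three_pos C u v
  simp only [zero_add, sub_zero] at hleft
  rw [show 3 * (u - 2 * L / 3) = 3 * u - 2 * L by ring,
    show 3 * (v - 2 * L / 3) = 3 * v - 2 * L by ring] at hright
  rw [cantorIterate, union_inter_distrib_right, measure_union₀ _ hoverlap, hleft, hright]
  exact (((isCompact_cantorIterate n L).image (by fun_prop)).measurableSet.inter
    measurableSet_Icc).nullMeasurableSet

theorem volume_cantorIterate_inter_Icc_le (n : ℕ) (L u v : ℝ) :
    volume (cantorIterate n L ∩ Icc u v) ≤ volume (cantorIterate n L ∩ Icc 0 (v - u)) := by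
  induction n generalizing u v with
  | zero =>
    simp only [cantorIterate, Icc_inter_Icc, Real.volume_Icc, max_self, sub_zero]
    apply ENNReal.ofReal_le_ofReal
    grind
  | succ n ih =>
    have hsub := cantorIterate_subset_Icc (n + 1) L
    rcases le_or_gt u 0 with hu | hu
    · rw [inter_Icc_eq_inter_Icc_zero hsub hu]
      exact measure_mono (inter_subset_inter_right _ (Icc_subset_Icc_right (by linarith)))
    have key := measure_inter_Icc_add_shift_le (isCompact_cantorIterate n L).measurableSet
      (cantorIterate_subset_Icc n L) ih (s := 3 * u) (t := 3 * v) (by positivity)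
    simp only [volume_cantorIterate_succ_inter_Icc, ← mul_add, mul_zero, zero_sub, mul_sub]
    gcongr

theorem cantor_measure_subadditive_general (L : ℝ) (n : ℕ) (a b : ℝ) :
    volume (cantorIterate n L ∩ Set.Icc 0 (a + b)) ≤
      volume (cantorIterate n L ∩ Set.Icc 0 a) +
        volume (cantorIterate n L ∩ Set.Icc 0 b) := by
  grw [measure_inter_Icc_le_add volume _ 0 a (a + b), volume_cantorIterate_inter_Icc_le n L a,
    add_sub_cancel_left]

/-- Subadditivity of the `n`-iterate Cantor function: for all `a, b ≥ 0`,
`|C_n(L) ∩ [0, a+b]| ≤ |C_n(L) ∩ [0, a]| + |C_n(L) ∩ [0, b]|`. -/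
theorem cantor_measure_subadditive (L : ℝ) (hL : 0 < L) (n : ℕ)
    (a b : ℝ) (ha : 0 ≤ a) (hb : 0 ≤ b) :
    volume (cantorIterate n L ∩ Set.Icc 0 (a + b)) ≤
      volume (cantorIterate n L ∩ Set.Icc 0 a) +
        volume (cantorIterate n L ∩ Set.Icc 0 b) :=
  cantor_measure_subadditive_general L n a b
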